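/- Let $H$ be a real Hilbert space, $\mathcal{A}$ a self-adjoint positive operator, and let $u \in C^3([0,\infty); H)$ with $u(t), u_t(t) \in \mathcal{D}(\mathcal{A})$ solve $\tau u_{ttt} + \alpha u_{tt} + c^2 \mathcal{A} u + b \mathcal{A} u_t = 0$ with $\tau, b, c > 0$ and $\gamma := \alpha - \frac{c^2\tau}{b} = 0$. Define $z(t) = u_t(t) + \frac{c^2}{b} u(t)$ and $E_0^{cr}(t) = b\|\mathcal{A}^{1/2} z(t)\|^2 + \tau \|z_t(t)\|^2$. Then $E_0^{cr}(t) = E_0^{cr}(0)$ for all $t \ge 0$. -/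

import Mathlib

open scoped RealInnerProductSpace

/-! With `z = u' + (c²/b) u`, the MGT operator splits as
`τ u''' + α u'' + c² A u + b A u' = τ z'' + b A z + (α - c²τ/b) u''`,
so for `γ = 0` the function `z` solves the undamped wave equation `τ z'' + b A z = 0`.
Its energy `b ⟪A z, z⟫ + τ ‖z'‖²` has derivative `2 ⟪τ z'' + b A z, z'⟫ = 0`,
using the symmetry of `A`. -/

section MGT

variable {K M : Type*} [Field K] [AddCommGroup M] [Module K M]

theorem wave_operator_eq_mgt_critical (A : M →ₗ[K] M) {τ b c : K} (hb : b ≠ 0)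
    (x y v w : M) :
    τ • (w + (c ^ 2 / b) • v) + b • A (x + (c ^ 2 / b) • y)
      = τ • w + (c ^ 2 * τ / b) • v + c ^ 2 • A y + b • A x := by
  have hτb : τ * (c ^ 2 / b) = c ^ 2 * τ / b := by ring
  have hcb : b * (c ^ 2 / b) = c ^ 2 := by field_simp
  simp only [map_add, map_smul, smul_add, smul_smul, hτb, hcb]
  abel

end MGT

section WaveEnergy

variable {H : Type*} [NormedAddCommGroup H] [InnerProductSpace ℝ H]

theorem HasDerivAt.inner_apply_self {A : H →L[ℝ] H} (hA : (A : H →ₗ[ℝ] H).IsSymmetric)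
    {z : ℝ → H} {z' : H} {t : ℝ} (hz : HasDerivAt z z' t) :
    HasDerivAt (fun s => ⟪A (z s), z s⟫) (2 * ⟪A (z t), z'⟫) t := by
  have hsymm : ⟪A z', z t⟫ = ⟪A (z t), z'⟫ := (hA z' (z t)).trans (real_inner_comm _ _)
  refine ((A.hasFDerivAt.comp_hasDerivAt t hz).inner ℝ hz).congr_deriv ?_
  rw [Function.comp_apply, hsymm]
  ring

def waveEnergy (A : H →L[ℝ] H) (τ b : ℝ) (z z' : H) : ℝ :=
  b * ⟪A z, z⟫ + τ * ‖z'‖ ^ 2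

theorem hasDerivAt_waveEnergy_eq_zero {A : H →L[ℝ] H} (hA : (A : H →ₗ[ℝ] H).IsSymmetric)
    {τ b : ℝ} {z z' z'' : ℝ → H} (hz : ∀ t, HasDerivAt z (z' t) t)
    (hz' : ∀ t, HasDerivAt z' (z'' t) t)
    (hwave : ∀ t, τ • z'' t + b • A (z t) = 0) (t : ℝ) :
    HasDerivAt (fun s => waveEnergy A τ b (z s) (z' s)) 0 t := by
  have hpower : 2 * ⟪τ • z'' t + b • A (z t), z' t⟫ = 0 := by
    rw [hwave t, inner_zero_left, mul_zero]
  refine ((((hz t).inner_apply_self hA).const_mul b).add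
    (((hz' t).norm_sq).const_mul τ)).congr_deriv ?_
  rw [← hpower, inner_add_left, real_inner_smul_left, real_inner_smul_left,
    real_inner_comm (z' t) (z'' t)]
  ring

theorem waveEnergy_eq {A : H →L[ℝ] H} (hA : (A : H →ₗ[ℝ] H).IsSymmetric)
    {τ b : ℝ} {z z' z'' : ℝ → H} (hz : ∀ t, HasDerivAt z (z' t) t)
    (hz' : ∀ t, HasDerivAt z' (z'' t) t)
    (hwave : ∀ t, τ • z'' t + b • A (z t) = 0) (t s : ℝ) :
    waveEnergy A τ b (z t) (z' t) = waveEnergy A τ b (z s) (z' s) :=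
  is_const_of_deriv_eq_zero
    (fun r => (hasDerivAt_waveEnergy_eq_zero hA hz hz' hwave r).differentiableAt)
    (fun r => (hasDerivAt_waveEnergy_eq_zero hA hz hz' hwave r).deriv) t s

end WaveEnergy

theorem mgt_critical_energy_conserved_general {H : Type*} [NormedAddCommGroup H]
    [InnerProductSpace ℝ H] [CompleteSpace H]
    (A : H →L[ℝ] H) (hA_sa : IsSelfAdjoint A)
    (τ α b c : ℝ) (hb : 0 < b)
    (hγ : α - c ^ 2 * τ / b = 0)
    (u u1 u2 u3 : ℝ → H)
    (hu1 : ∀ t, HasDerivAt u (u1 t) t)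
    (hu2 : ∀ t, HasDerivAt u1 (u2 t) t)
    (hu3 : ∀ t, HasDerivAt u2 (u3 t) t)
    (heq : ∀ t, τ • u3 t + α • u2 t + c ^ 2 • A (u t) + b • A (u1 t) = 0) :
    ∀ t, 0 ≤ t →
      b * (inner ℝ (A (u1 t + (c ^ 2 / b) • u t)) (u1 t + (c ^ 2 / b) • u t) : ℝ)
        + τ * ‖u2 t + (c ^ 2 / b) • u1 t‖ ^ 2
      = b * (inner ℝ (A (u1 0 + (c ^ 2 / b) • u 0)) (u1 0 + (c ^ 2 / b) • u 0) : ℝ)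
        + τ * ‖u2 0 + (c ^ 2 / b) • u1 0‖ ^ 2 := by
  obtain rfl : α = c ^ 2 * τ / b := sub_eq_zero.mp hγ
  intro t _
  refine waveEnergy_eq (ContinuousLinearMap.isSelfAdjoint_iff_isSymmetric.mp hA_sa)
    (z := fun s => u1 s + (c ^ 2 / b) • u s)
    (fun s => (hu2 s).add ((hu1 s).const_smul _)) (fun s => (hu3 s).add ((hu2 s).const_smul _))
    (fun s => ?_) t 0
  rw [← heq s]
  exact wave_operator_eq_mgt_critical A.toLinearMap hb.ne' (u1 s) (u s) (u2 s) (u3 s)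

/-- Conservation of the critical energy for the MGT equation: if `γ = α - c²τ/b = 0`
and `u` solves `τu''' + αu'' + c²Au + bAu' = 0`, then with `z = u' + (c²/b)u` the
energy `E₀ᶜʳ(t) = b‖A½z‖² + τ‖z'‖²` (written via `‖A½v‖² = (Av, v)`) is constant. -/
theorem mgt_critical_energy_conserved {H : Type*} [NormedAddCommGroup H]
    [InnerProductSpace ℝ H] [CompleteSpace H]
    (A : H →L[ℝ] H) (hA_sa : IsSelfAdjoint A)
    (hA_pos : ∀ v : H, 0 ≤ (inner ℝ (A v) v : ℝ))
    (τ α b c : ℝ) (hτ : 0 < τ) (hb : 0 < b) (hc : 0 < c)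
    (hγ : α - c ^ 2 * τ / b = 0)
    (u u1 u2 u3 : ℝ → H)
    (hu1 : ∀ t, HasDerivAt u (u1 t) t)
    (hu2 : ∀ t, HasDerivAt u1 (u2 t) t)
    (hu3 : ∀ t, HasDerivAt u2 (u3 t) t)
    (hcont : Continuous u3)
    (heq : ∀ t, τ • u3 t + α • u2 t + c ^ 2 • A (u t) + b • A (u1 t) = 0) :
    ∀ t, 0 ≤ t →
      b * (inner ℝ (A (u1 t + (c ^ 2 / b) • u t)) (u1 t + (c ^ 2 / b) • u t) : ℝ)
        + τ * ‖u2 t + (c ^ 2 / b) • u1 t‖ ^ 2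
      = b * (inner ℝ (A (u1 0 + (c ^ 2 / b) • u 0)) (u1 0 + (c ^ 2 / b) • u 0) : ℝ)
        + τ * ‖u2 0 + (c ^ 2 / b) • u1 0‖ ^ 2 :=
  mgt_critical_energy_conserved_general A hA_sa τ α b c hb hγ u u1 u2 u3 hu1 hu2 hu3 heq
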